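/- Let G be a connected strongly regular graph with parameters (n, k, 2, μ) in which the neighbourhood of each vertex induces a single cycle. Then every eigenvalue of the adjacency matrix of Δ(G) lies in [−4, 4], and Δ(G) contains the semi-total point graph R(C_k) as an induced subgraph. -/

import Mathlib

open scoped Classical

namespace GallaiSRG

open SimpleGraph

variable {V : Type*}

/-- Two edges (given as elements of `Sym2 V`) span a triangle in `G`:
they share an endpoint and their other endpoints are adjacent. -/
def SpansTriangle (G : SimpleGraph V) (e f : Sym2 V) : Prop :=
  ∃ u v w : V, e = s(u, v) ∧ f = s(u, w) ∧ G.Adj v w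

lemma SpansTriangle.symm {G : SimpleGraph V} {e f : Sym2 V}
    (h : SpansTriangle G e f) : SpansTriangle G f e := by
  obtain ⟨u, v, w, he, hf, ha⟩ := h
  exact ⟨u, w, v, hf, he, ha.symm⟩

/-- Two edges are incident: they are distinct and share an endpoint. -/
def Incident (e f : Sym2 V) : Prop :=
  e ≠ f ∧ ∃ u : V, u ∈ e ∧ u ∈ f

lemma Incident.symm {e f : Sym2 V} (h : Incident e f) : Incident f e :=
  ⟨h.1.symm, h.2.imp fun _ hu => ⟨hu.2, hu.1⟩⟩

/-- The Gallai graph of `G`: vertices are the edges of `G`, two of them adjacent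
iff the corresponding edges share an endpoint but do not span a triangle of `G`. -/
def gallai (G : SimpleGraph V) : SimpleGraph G.edgeSet where
  Adj e f := Incident (e : Sym2 V) (f : Sym2 V) ∧ ¬SpansTriangle G (e : Sym2 V) (f : Sym2 V)
  symm := ⟨fun e f h => ⟨h.1.symm, fun hs => h.2 hs.symm⟩⟩
  loopless := ⟨fun e h => h.1.1 rfl⟩

/-- The anti-Gallai graph of `G`: vertices are the edges of `G`, two of them adjacent
iff the corresponding edges span a triangle of `G`. -/
def antiGallai (G : SimpleGraph V) : SimpleGraph G.edgeSet where
  Adj e f := (e : Sym2 V) ≠ (f : Sym2 V) ∧ SpansTriangle G (e : Sym2 V) (f : Sym2 V)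
  symm := ⟨fun e f h => ⟨h.1.symm, h.2.symm⟩⟩
  loopless := ⟨fun e h => h.1 rfl⟩

/-- Edge-regularity with parameters `(N, K, L)`, phrased via `Nat.card`/`Set.ncard`
to avoid decidability assumptions: `N` vertices, `K`-regular, adjacent vertices have
exactly `L` common neighbours. -/
def IsEdgeRegularN {W : Type*} (H : SimpleGraph W) (N K L : ℕ) : Prop :=
  Nat.card W = N ∧ (∀ x : W, (H.neighborSet x).ncard = K) ∧
    ∀ x y : W, H.Adj x y → (H.neighborSet x ∩ H.neighborSet y).ncard = L

/-- The diamond graph: `K₄` minus one edge. -/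
def diamond : SimpleGraph (Fin 4) :=
  (completeGraph (Fin 4)).deleteEdges {s(0, 1)}

/-- The fan graph `F_m`: `m` triangles sharing exactly one common (central) vertex. -/
def fanGraph (m : ℕ) : SimpleGraph (Unit ⊕ Fin m × Fin 2) :=
  SimpleGraph.fromRel fun a b =>
    a = Sum.inl () ∨ ∃ i : Fin m, a = Sum.inr (i, 0) ∧ b = Sum.inr (i, 1)

/-- The semi-total point graph `R(H)`: to `H` add, for every edge, a new vertex
adjacent to both endpoints of that edge. -/
def semiTotal (H : SimpleGraph V) : SimpleGraph (V ⊕ H.edgeSet) :=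
  SimpleGraph.fromRel fun a b =>
    (∃ w w' : V, a = Sum.inl w ∧ b = Sum.inl w' ∧ H.Adj w w') ∨
    (∃ (w : V) (e : H.edgeSet), a = Sum.inl w ∧ b = Sum.inr e ∧ w ∈ (e : Sym2 V))

/-- The join `H ∨ K₁` of a graph `H` with one extra vertex (`none`). -/
def joinOne (H : SimpleGraph V) : SimpleGraph (Option V) :=
  SimpleGraph.fromRel fun a b =>
    a = none ∨ ∃ w w' : V, a = some w ∧ b = some w' ∧ H.Adj w w'

end GallaiSRG

/-!
An edge `xy` of `G` spans a triangle only with the edges `xd`, `yd` for the `λ = 2` common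
neighbours `d` of `x` and `y`, so `Δ(G)` has maximum degree at most `4` and Gershgorin's theorem
confines its spectrum to `[-4, 4]`.

For the embedding, fix a vertex `v`; its neighbourhood is a `k`-cycle `C`. The spokes `vw`
(`w ∈ C`) and the rims `ww'` (`ww'` an edge of `C`) induce `R(C_k)` in `Δ(G)`: two spokes span a
triangle iff their ends are adjacent on `C`, a spoke and a rim iff they share a vertex, and two
rims never, as long as `C` is triangle-free. That is where `k ≠ 3` enters: if every
neighbourhood were a triangle, `G` would be complete by connectivity.
-/

namespace SimpleGraph

variable {V W : Type*}

lemma norm_le_of_hasEigenvalue_adjMatrix {K : Type*} [NormedField K] [NormOneClass K]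
    [Fintype V] [DecidableEq V] {G : SimpleGraph V} [DecidableRel G.Adj] {d : ℕ}
    (hd : ∀ v, G.degree v ≤ d) {x : K}
    (hx : Module.End.HasEigenvalue (Matrix.toLin' (G.adjMatrix K)) x) : ‖x‖ ≤ d := by
  obtain ⟨v, hv⟩ := eigenvalue_mem_ball hx
  rw [Metric.mem_closedBall, adjMatrix_apply, if_neg G.irrefl, dist_zero_right] at hv
  calc ‖x‖ ≤ ∑ j ∈ Finset.univ.erase v, ‖G.adjMatrix K v j‖ := hv
    _ ≤ ∑ j, ‖G.adjMatrix K v j‖ :=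
        Finset.sum_le_sum_of_subset_of_nonneg (Finset.erase_subset _ _) fun _ _ _ => norm_nonneg _
    _ = G.degree v := by
        simp [adjMatrix_apply, apply_ite, Finset.sum_boole, degree, neighborFinset_eq_filter]
    _ ≤ d := by exact_mod_cast hd v

lemma Connected.eq_top_of_isClique_neighborSet {G : SimpleGraph V} (hG : G.Connected)
    (h : ∀ v, G.IsClique (G.neighborSet v)) : G = ⊤ := by
  obtain ⟨v⟩ := hG.nonempty
  have hclosed : ∀ {a b : V}, G.Walk a b → (b = v ∨ G.Adj v b) → a = v ∨ G.Adj v a := by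
    intro a b p
    induction p with
    | nil => exact id
    | @cons a x b hax _ ih =>
      rintro hb
      by_cases hav : a = v
      · exact .inl hav
      rcases ih hb with rfl | hvx
      · exact .inr hax.symm
      · exact .inr (h x hvx.symm hax.symm (Ne.symm hav))
  have hall (a : V) : a = v ∨ G.Adj v a := hclosed (hG.preconnected a v).some (.inl rfl)
  ext a b
  refine ⟨Adj.ne, fun hab => ?_⟩
  rcases hall a with rfl | ha <;> rcases hall b with rfl | hb
  · exact absurd rfl hab
  · exact hb
  · exact ha.symm
  · exact h v ha hb hab

lemma isClique_of_induce_iso_top {G : SimpleGraph V} {s : Set V}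
    (φ : G.induce s ≃g (⊤ : SimpleGraph W)) : G.IsClique s := by
  rw [← induce_eq_top]
  ext a b
  rw [← φ.map_adj_iff, top_adj, top_adj, φ.injective.ne_iff]

open Fin.CommRing in
lemma cycleGraph_cliqueFree_three {k : ℕ} (hk : k ≠ 3) : (cycleGraph k).CliqueFree 3 := by
  rintro s hs
  obtain ⟨a, b, c, hab, hac, hbc, rfl⟩ := is3Clique_iff.mp hs
  match k, hk with
  | 0, _ => exact a.elim0
  | 1, _ => exact cycleGraph_one_adj hab
  | 2, _ => fin_cases a <;> fin_cases b <;> fin_cases c <;> simp_all [cycleGraph_adj]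
  | n + 4, _ =>
    have h3 : (3 : Fin (n + 4)) ≠ 0 :=
      Fin.ne_of_val_ne (by simp [Nat.mod_eq_of_lt (show 3 < n + 4 by omega)])
    -- `(a - b) + (b - c) = a - c` with all three differences `±1` forces `1 = 0` or `3 = 0`
    rw [cycleGraph_adj] at hab hac hbc
    grind

end SimpleGraph

namespace GallaiSRG

open SimpleGraph

variable {V : Type*}

section SpansTriangle

variable {G : SimpleGraph V}

lemma spansTriangle_comm {e f : Sym2 V} : SpansTriangle G e f ↔ SpansTriangle G f e :=
  ⟨SpansTriangle.symm, SpansTriangle.symm⟩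

lemma SpansTriangle.ne {e f : Sym2 V} (h : SpansTriangle G e f) : e ≠ f := by
  obtain ⟨u, v, w, rfl, rfl, hvw⟩ := h
  rw [Ne, Sym2.congr_right]
  exact hvw.ne

lemma antiGallai_adj {e f : G.edgeSet} : (antiGallai G).Adj e f ↔ SpansTriangle G e f :=
  ⟨And.right, fun h => ⟨h.ne, h⟩⟩

lemma spansTriangle_mk_mk_iff {v a b : V} : SpansTriangle G s(v, a) s(v, b) ↔ G.Adj a b := by
  refine ⟨?_, fun h => ⟨v, a, b, rfl, rfl, h⟩⟩
  rintro ⟨u, c, d, h1, h2, hcd⟩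
  rw [Sym2.eq_iff] at h1 h2
  grind [SimpleGraph.Adj.symm, SimpleGraph.irrefl]

lemma spansTriangle_mk_iff_mem {v x : V} {f : Sym2 V} (hf : ∀ y ∈ f, G.Adj v y) :
    SpansTriangle G s(v, x) f ↔ x ∈ f := by
  induction f using Sym2.ind with | _ a b => ?_
  have ha : v ≠ a := (hf a (Sym2.mem_mk_left a b)).ne
  have hb : v ≠ b := (hf b (Sym2.mem_mk_right a b)).ne
  rw [Sym2.mem_iff]
  constructor
  · rintro ⟨u, c, d, h1, h2, -⟩
    rw [Sym2.eq_iff] at h1 h2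
    grind
  · rintro (rfl | rfl)
    · exact ⟨x, v, b, Sym2.eq_swap, rfl, hf b (Sym2.mem_mk_right x b)⟩
    · exact ⟨x, v, a, Sym2.eq_swap, Sym2.eq_swap, hf a (Sym2.mem_mk_left a x)⟩

lemma SpansTriangle.exists_mem_commonNeighbors {x y : V} {f : Sym2 V}
    (h : SpansTriangle G s(x, y) f) (hf : f ∈ G.edgeSet) :
    ∃ d ∈ G.commonNeighbors x y, f = s(x, d) ∨ f = s(y, d) := by
  obtain ⟨u, c, d, he, rfl, hcd⟩ := h
  rw [Sym2.eq_iff] at he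
  rcases he with ⟨rfl, rfl⟩ | ⟨rfl, rfl⟩
  · exact ⟨d, ⟨hf, hcd⟩, .inl rfl⟩
  · exact ⟨d, ⟨hcd, hf⟩, .inr rfl⟩

lemma not_spansTriangle_of_cliqueFree (hG : G.CliqueFree 3) {e f : Sym2 V}
    (he : e ∈ G.edgeSet) (hf : f ∈ G.edgeSet) : ¬SpansTriangle G e f := by
  rintro ⟨u, v, w, rfl, rfl, hvw⟩
  exact hG {u, v, w} (is3Clique_triple_iff.mpr ⟨he, hf, hvw⟩)

lemma spansTriangle_map_iff {W : Type*} {H : SimpleGraph W} (ψ : H ↪g G) {e f : Sym2 W} :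
    SpansTriangle G (e.map ψ) (f.map ψ) ↔ SpansTriangle H e f := by
  refine ⟨?_, fun ⟨u, v, w, he, hf, hvw⟩ =>
    ⟨ψ u, ψ v, ψ w, by simp [he], by simp [hf], ψ.map_adj_iff.mpr hvw⟩⟩
  induction e using Sym2.ind with | _ a b => ?_
  induction f using Sym2.ind with | _ c d => ?_
  rintro ⟨u, x, y, h1, h2, hxy⟩
  simp only [Sym2.map_mk, Sym2.eq_iff] at h1 h2
  rcases h1 with ⟨rfl, rfl⟩ | ⟨rfl, rfl⟩ <;> rcases h2 with ⟨h, rfl⟩ | ⟨rfl, h⟩ <;>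
    obtain rfl := ψ.injective h <;> rw [ψ.map_adj_iff] at hxy
  · exact ⟨c, b, d, rfl, rfl, hxy⟩
  · exact ⟨d, b, c, rfl, Sym2.eq_swap, hxy⟩
  · exact ⟨c, a, d, Sym2.eq_swap, rfl, hxy⟩
  · exact ⟨d, a, c, Sym2.eq_swap, Sym2.eq_swap, hxy⟩

end SpansTriangle

section SemiTotal

variable {W : Type*} {H : SimpleGraph W}

@[simp]
lemma semiTotal_adj_inl_inl {a b : W} : (semiTotal H).Adj (.inl a) (.inl b) ↔ H.Adj a b := by
  simp only [semiTotal, fromRel_adj]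
  grind [SimpleGraph.Adj.symm, SimpleGraph.Adj.ne]

@[simp]
lemma semiTotal_adj_inl_inr {a : W} {e : H.edgeSet} :
    (semiTotal H).Adj (.inl a) (.inr e) ↔ a ∈ (e : Sym2 W) := by
  simp [semiTotal]

@[simp]
lemma semiTotal_adj_inr_inl {a : W} {e : H.edgeSet} :
    (semiTotal H).Adj (.inr e) (.inl a) ↔ a ∈ (e : Sym2 W) := by
  simp [semiTotal]

@[simp]
lemma semiTotal_not_adj_inr_inr {e f : H.edgeSet} : ¬(semiTotal H).Adj (.inr e) (.inr f) := by
  simp [semiTotal]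

end SemiTotal

section Embedding

variable {G : SimpleGraph V} {W : Type*} {H : SimpleGraph W}

def semiTotalEmbedding (hH : H.CliqueFree 3) (ψ : H ↪g G) (v : V) (hv : ∀ w, G.Adj v (ψ w)) :
    semiTotal H ↪g antiGallai G where
  toFun := Sum.elim (fun w => ⟨s(v, ψ w), hv w⟩)
    (fun e => ⟨(e : Sym2 W).map ψ, ψ.map_mem_edgeSet_iff.mpr e.2⟩)
  inj' := by
    refine Function.Injective.sumElim (fun a b h => ψ.injective ?_) (fun e f h => ?_) ?_
    · exact Sym2.congr_right.mp (congrArg Subtype.val h)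
    · exact Subtype.ext (Sym2.map.injective ψ.injective (congrArg Subtype.val h))
    · intro a e h
      have hv_mem : v ∈ (e : Sym2 W).map ψ := by
        rw [← show s(v, ψ a) = (e : Sym2 W).map ψ from congrArg Subtype.val h]
        exact Sym2.mem_mk_left _ _
      obtain ⟨b, -, hb⟩ := Sym2.mem_map.mp hv_mem
      exact (hv b).ne hb.symm
  map_rel_iff' := by
    have hrim (e : H.edgeSet) : ∀ y ∈ (e : Sym2 W).map ψ, G.Adj v y := by
      rintro _ hy
      obtain ⟨b, -, rfl⟩ := Sym2.mem_map.mp hy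
      exact hv b
    rintro (a | e) (b | f) <;>
      simp only [Function.Embedding.coeFn_mk, Sum.elim_inl, Sum.elim_inr, antiGallai_adj]
    · simp [spansTriangle_mk_mk_iff]
    · rw [spansTriangle_mk_iff_mem (hrim f)]
      simp [Sym2.mem_map, ψ.injective.eq_iff]
    · rw [spansTriangle_comm, spansTriangle_mk_iff_mem (hrim e)]
      simp [Sym2.mem_map, ψ.injective.eq_iff]
    · simp only [semiTotal_not_adj_inr_inr, iff_false, spansTriangle_map_iff]
      exact not_spansTriangle_of_cliqueFree hH e.2 f.2

end Embedding

lemma antiGallai_degree_le [Fintype V] [DecidableEq V] {G : SimpleGraph V} [DecidableRel G.Adj]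
    {L : ℕ} (hL : ∀ x y, G.Adj x y → Fintype.card (G.commonNeighbors x y) ≤ L)
    (e : G.edgeSet) : (antiGallai G).degree e ≤ 2 * L := by
  obtain ⟨e, he⟩ := e
  induction e using Sym2.ind with | _ x y => ?_
  set C := (G.commonNeighbors x y).toFinset
  have hmaps : ∀ f ∈ (antiGallai G).neighborFinset ⟨s(x, y), he⟩,
      (f : Sym2 V) ∈ C.image (s(x, ·)) ∪ C.image (s(y, ·)) := by
    intro f hf
    rw [mem_neighborFinset, antiGallai_adj] at hf
    obtain ⟨d, hd, hfd | hfd⟩ := hf.exists_mem_commonNeighbors f.2 <;> rw [hfd]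
    · exact Finset.mem_union_left _ (Finset.mem_image_of_mem _ (Set.mem_toFinset.mpr hd))
    · exact Finset.mem_union_right _ (Finset.mem_image_of_mem _ (Set.mem_toFinset.mpr hd))
  calc (antiGallai G).degree ⟨s(x, y), he⟩
      ≤ (C.image (s(x, ·)) ∪ C.image (s(y, ·))).card :=
        Finset.card_le_card_of_injOn _ hmaps Subtype.val_injective.injOn
    _ ≤ C.card + C.card :=
        (Finset.card_union_le _ _).trans (add_le_add Finset.card_image_le Finset.card_image_le)
    _ ≤ 2 * L := by
        rw [Set.toFinset_card]
        linarith [hL x y he]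

theorem antiGallai_spectrum_interlace_general {V : Type*} [Fintype V] [DecidableEq V]
    (G : SimpleGraph V) [DecidableRel G.Adj] {n k m : ℕ} (hG : G.IsSRGWith n k 2 m)
    (hconn : G.Connected) (hnc : G ≠ ⊤)
    (hwheel : ∀ v : V, Nonempty (G.induce (G.neighborSet v) ≃g cycleGraph k)) :
    (∀ x : ℝ, Module.End.HasEigenvalue
        (Matrix.toLin' ((antiGallai G).adjMatrix ℝ)) x → |x| ≤ 4) ∧
      Nonempty (semiTotal (cycleGraph k) ↪g antiGallai G) := by
  refine ⟨fun x hx => ?_, ?_⟩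
  · have hdeg := antiGallai_degree_le fun x y hxy => (hG.of_adj x y hxy).le
    simpa using norm_le_of_hasEigenvalue_adjMatrix hdeg hx
  · have hk : k ≠ 3 := by
      rintro rfl
      rw [cycleGraph_three_eq_top] at hwheel
      exact hnc (hconn.eq_top_of_isClique_neighborSet fun v =>
        isClique_of_induce_iso_top (hwheel v).some)
    obtain ⟨v⟩ := hconn.nonempty
    let φ := (hwheel v).some.symm
    exact ⟨semiTotalEmbedding (cycleGraph_cliqueFree_three hk)
      ((Embedding.induce _).comp φ.toEmbedding) v fun w => (φ w).2⟩

/-- For a connected SRG with `λ = 2` whose vertex neighbourhoods induce single cycles,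
every adjacency eigenvalue of the anti-Gallai graph lies in `[-4, 4]`, and the
semi-total point graph `R(C_k)` is an induced subgraph of the anti-Gallai graph. -/
theorem antiGallai_spectrum_interlace {V : Type*} [Fintype V] [DecidableEq V]
    (G : SimpleGraph V) [DecidableRel G.Adj] {n k m : ℕ} (hG : G.IsSRGWith n k 2 m)
    (hconn : G.Connected) (hnc : G ≠ ⊤) (hne : G ≠ ⊥)
    (hwheel : ∀ v : V, Nonempty (G.induce (G.neighborSet v) ≃g cycleGraph k)) :
    (∀ x : ℝ, Module.End.HasEigenvalue
        (Matrix.toLin' ((antiGallai G).adjMatrix ℝ)) x → |x| ≤ 4) ∧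
      Nonempty (semiTotal (cycleGraph k) ↪g antiGallai G) :=
  antiGallai_spectrum_interlace_general G hG hconn hnc hwheel

end GallaiSRG
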